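/- Let 𝒜 be a C*-algebra, X a Hilbert 𝒜-module, and μ a probability measure on a measurable space Ω. For all f, g ∈ L₂(Ω, X), ‖∫_Ω ⟨f(t), g(t)⟩ dμ(t) − ⟨∫_Ω f(t) dμ(t), ∫_Ω g(t) dμ(t)⟩‖² ≤ ‖∫_Ω |f(t)|² dμ(t) − |∫_Ω f(t) dμ(t)|²‖ · ‖∫_Ω |g(t)|² dμ(t) − |∫_Ω g(t) dμ(t)|²‖. -/

import Mathlib

/-! Subtracting means turns the Grüss functional into the `A`-valued form
`⟪F, G⟫ = ∫ ⟪F t, G t⟫ dμ` evaluated at the centred functions, and this form is positive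
semidefinite. Such a form satisfies `‖⟪F, G⟫‖² ≤ ‖⟪F, F⟫‖ ‖⟪G, G⟫‖`: expand
`0 ≤ ⟪F <• b - c • G, F <• b - c • G⟫` with `b = ⟪F, G⟫`, bound `star b ⟪F, F⟫ b` by
`c • star b b` for `c > ‖⟪F, F⟫‖`, and let `c` decrease to `‖⟪F, F⟫‖`. Pointwise, the same
inequality gives `‖⟪x, y⟫‖ ≤ ‖x‖ ‖y‖`, which makes `⟪f, g⟫` integrable for `f, g ∈ L₂`. -/

open MeasureTheory
open scoped RightActions

/-- The `CStarModule` class as it stood in Mathlib of December 2024: a *right* Hilbert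
C⋆-module, with `SMul Aᵐᵒᵖ E` and `⟪x, y <• a⟫ = ⟪x, y⟫ * a`. (Mathlib's current `CStarModule`
uses a left action `SMul A E` with `⟪x, a • y⟫ = a * ⟪x, y⟫`.) -/
class RightCStarModule (A E : Type*) [NonUnitalSemiring A] [StarRing A] [Module ℂ A]
    [AddCommGroup E] [Module ℂ E] [PartialOrder A] [SMul Aᵐᵒᵖ E] [Norm A] [Norm E]
    extends Inner A E where
  inner_add_right {x} {y} {z} : inner x (y + z) = inner x y + inner x z
  inner_self_nonneg {x} : 0 ≤ inner x x
  inner_self {x} : inner x x = 0 ↔ x = 0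
  inner_op_smul_right {a : A} {x y : E} : inner x (y <• a) = inner x y * a
  inner_smul_right_complex {z : ℂ} {x} {y} : inner x (z • y) = z • inner x y
  star_inner x y : star (inner x y) = inner y x
  norm_eq_sqrt_norm_inner_self x : ‖x‖ = √‖inner x x‖

open Filter Topology

section CStarAlgebra

variable {A : Type*} [NonUnitalCStarAlgebra A] [PartialOrder A] [StarOrderedRing A]

/-- Cauchy–Schwarz for an `A`-valued positive semidefinite form: `h` is
`0 ≤ ⟪x <• a - c • y, x <• a - c • y⟫` with `P = ⟪x, x⟫`, `b = ⟪x, y⟫`, `Q = ⟪y, y⟫`. -/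
lemma CStarAlgebra.norm_sq_le_of_quadratic_nonneg {P Q b : A} (hP : IsSelfAdjoint P)
    (h : ∀ (a : A) (c : ℝ),
      0 ≤ star a * P * a - c • (star a * b) - c • (star b * a) + c ^ 2 • Q) :
    ‖b‖ ^ 2 ≤ ‖P‖ * ‖Q‖ := by
  -- take `a = b` in `h` and let `c` decrease to `‖P‖`
  have key : ∀ c : ℝ, ‖P‖ < c → ‖b‖ ^ 2 ≤ c * ‖Q‖ := by
    intro c hc
    have hc₀ : 0 < c := (norm_nonneg P).trans_lt hc
    have hconj : star b * P * b ≤ c • (star b * b) :=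
      (CStarAlgebra.star_left_conjugate_le_norm_smul hP).trans
        (smul_le_smul_of_nonneg_right hc.le (star_mul_self_nonneg b))
    have hquad : 0 ≤ c • (star b * b) - c • (star b * b) - c • (star b * b) + c ^ 2 • Q :=
      (h b c).trans (by gcongr)
    have hle : star b * b ≤ c • Q := by
      rw [sub_self, zero_sub, le_neg_add_iff_add_le, add_zero, sq, mul_smul] at hquad
      exact (smul_le_smul_iff_of_pos_left hc₀).mp hquad
    calc ‖b‖ ^ 2 = ‖star b * b‖ := by rw [CStarRing.norm_star_mul_self, sq]
      _ ≤ ‖c • Q‖ := CStarAlgebra.norm_le_norm_of_nonneg_of_le (star_mul_self_nonneg b) hle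
      _ = c * ‖Q‖ := by rw [norm_smul, Real.norm_of_nonneg hc₀.le]
  have hlim : Tendsto (fun c => c * ‖Q‖) (𝓝[>] ‖P‖) (𝓝 (‖P‖ * ‖Q‖)) :=
    ((continuous_id.mul continuous_const).tendsto _).mono_left nhdsWithin_le_nhds
  exact ge_of_tendsto hlim (eventually_nhdsWithin_of_forall key)

end CStarAlgebra

lemma integral_star {α E : Type*} [MeasurableSpace α] {μ : Measure α} [NormedAddCommGroup E]
    [NormedSpace ℝ E] [StarAddMonoid E] [ContinuousStar E] [StarModule ℝ E] (f : α → E) :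
    ∫ t, star (f t) ∂μ = star (∫ t, f t ∂μ) :=
  (starL' ℝ : E ≃L[ℝ] E).integral_comp_comm f

namespace RightCStarModule

section Algebra

variable {A E : Type*} [NonUnitalCStarAlgebra A] [PartialOrder A] [AddCommGroup E]
  [Module ℂ E] [SMul Aᵐᵒᵖ E] [Norm E] [RightCStarModule A E]

local notation "⟪" x ", " y "⟫" => inner A x y

lemma inner_add_left {x y z : E} : ⟪x + y, z⟫ = ⟪x, z⟫ + ⟪y, z⟫ := by
  rw [← star_inner, inner_add_right, star_add, star_inner, star_inner]

lemma inner_op_smul_left {a : A} {x y : E} : ⟪x <• a, y⟫ = star a * ⟪x, y⟫ := by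
  rw [← star_inner, inner_op_smul_right, star_mul, star_inner]

lemma inner_smul_right_real {r : ℝ} {x y : E} : ⟪x, r • y⟫ = r • ⟪x, y⟫ := by
  rw [← Complex.coe_smul, inner_smul_right_complex, Complex.coe_smul]

lemma inner_smul_left_real {r : ℝ} {x y : E} : ⟪r • x, y⟫ = r • ⟪x, y⟫ := by
  rw [← star_inner, inner_smul_right_real, star_smul, star_trivial, star_inner]

variable (A E) in
noncomputable def innerₗ : E →ₗ[ℝ] E →ₗ[ℝ] A :=
  LinearMap.mk₂ ℝ (inner A) (fun _ _ _ => inner_add_left) (fun _ _ _ => inner_smul_left_real)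
    (fun _ _ _ => inner_add_right) (fun _ _ _ => inner_smul_right_real)

lemma inner_sub_left {x y z : E} : ⟪x - y, z⟫ = ⟪x, z⟫ - ⟪y, z⟫ :=
  (innerₗ A E).map_sub₂ x y z

lemma inner_sub_right {x y z : E} : ⟪x, y - z⟫ = ⟪x, y⟫ - ⟪x, z⟫ :=
  (innerₗ A E x).map_sub y z

lemma inner_op_smul_sub_smul_self (x y : E) (a : A) (c : ℝ) :
    ⟪x <• a - c • y, x <• a - c • y⟫ = star a * ⟪x, x⟫ * a - c • (star a * ⟪x, y⟫)
      - c • (star ⟪x, y⟫ * a) + c ^ 2 • ⟪y, y⟫ := by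
  simp only [inner_sub_left, inner_sub_right, inner_op_smul_left, inner_op_smul_right,
    inner_smul_left_real, inner_smul_right_real, star_inner, sub_mul, smul_sub,
    smul_mul_assoc, smul_smul, mul_assoc, sq]
  abel

variable (A) in
lemma norm_sq_eq_norm_inner_self (x : E) : ‖x‖ ^ 2 = ‖⟪x, x⟫‖ := by
  rw [norm_eq_sqrt_norm_inner_self (A := A), Real.sq_sqrt (norm_nonneg _)]

end Algebra

section Normed

variable {A E : Type*} [NonUnitalCStarAlgebra A] [PartialOrder A] [StarOrderedRing A]
  [NormedAddCommGroup E] [NormedSpace ℂ E] [SMul Aᵐᵒᵖ E] [RightCStarModule A E]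

local notation "⟪" x ", " y "⟫" => inner A x y

lemma norm_inner_le (x y : E) : ‖⟪x, y⟫‖ ≤ ‖x‖ * ‖y‖ := by
  have h := CStarAlgebra.norm_sq_le_of_quadratic_nonneg (P := ⟪x, x⟫) (Q := ⟪y, y⟫)
    (b := ⟪x, y⟫) (star_inner x x) fun a c => by
      rw [← inner_op_smul_sub_smul_self]
      exact inner_self_nonneg
  rw [← norm_sq_eq_norm_inner_self, ← norm_sq_eq_norm_inner_self, ← mul_pow] at h
  exact le_of_sq_le_sq h (by positivity)

variable (A E) in
noncomputable def innerL : E →L[ℝ] E →L[ℝ] A :=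
  (innerₗ A E).mkContinuous₂ 1 fun x y => by
    rw [one_mul]
    exact norm_inner_le x y

end Normed

section Integral

variable {A : Type*} [NonUnitalCStarAlgebra A] [PartialOrder A] [StarOrderedRing A]
  {X : Type*} [NormedAddCommGroup X] [NormedSpace ℂ X] [SMul Aᵐᵒᵖ X] [RightCStarModule A X]
  {Ω : Type*} [MeasurableSpace Ω] {μ : Measure Ω}

local notation "⟪" x ", " y "⟫" => inner A x y

lemma integrable_inner {f g : Ω → X} (hf : MemLp f 2 μ) (hg : MemLp g 2 μ) :
    Integrable (fun t => ⟪f t, g t⟫) μ :=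
  memLp_one_iff_integrable.1 ((innerL A X).memLp_of_bilin 1 hf hg)

lemma integral_inner_op_smul_sub_smul_self {F G : Ω → X} (hF : MemLp F 2 μ) (hG : MemLp G 2 μ)
    (a : A) (c : ℝ) :
    ∫ t, ⟪F t <• a - c • G t, F t <• a - c • G t⟫ ∂μ
      = star a * (∫ t, ⟪F t, F t⟫ ∂μ) * a - c • (star a * ∫ t, ⟪F t, G t⟫ ∂μ)
        - c • (star (∫ t, ⟪F t, G t⟫ ∂μ) * a) + c ^ 2 • ∫ t, ⟪G t, G t⟫ ∂μ := by
  have hFF := integrable_inner (A := A) hF hF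
  have hFG := integrable_inner (A := A) hF hG
  have hGG := integrable_inner (A := A) hG hG
  have hGF : Integrable (fun t => star ⟪F t, G t⟫) μ := by
    simpa only [star_inner] using integrable_inner (A := A) hG hF
  have h₀ : Integrable (fun t => star a * ⟪F t, F t⟫) μ := hFF.smul (star a)
  have h₁ : Integrable (fun t => star a * ⟪F t, F t⟫ * a) μ := h₀.smul (MulOpposite.op a)
  have h₂ : Integrable (fun t => c • (star a * ⟪F t, G t⟫)) μ := (hFG.smul (star a)).smul c
  have h₃ : Integrable (fun t => c • (star ⟪F t, G t⟫ * a)) μ :=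
    (hGF.smul (MulOpposite.op a)).smul c
  simp_rw [inner_op_smul_sub_smul_self]
  rw [integral_add, integral_sub, integral_sub, integral_smul, integral_smul, integral_smul,
    integral_mul_const_of_integrable h₀, integral_const_mul_of_integrable hFF,
    integral_const_mul_of_integrable hFG, integral_mul_const_of_integrable hGF, integral_star]
  all_goals fun_prop

lemma norm_integral_inner_sq_le {F G : Ω → X} (hF : MemLp F 2 μ) (hG : MemLp G 2 μ) :
    ‖∫ t, ⟪F t, G t⟫ ∂μ‖ ^ 2 ≤ ‖∫ t, ⟪F t, F t⟫ ∂μ‖ * ‖∫ t, ⟪G t, G t⟫ ∂μ‖ := by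
  have hP : IsSelfAdjoint (∫ t, ⟪F t, F t⟫ ∂μ) := by
    rw [IsSelfAdjoint, ← integral_star]
    simp only [star_inner]
  refine CStarAlgebra.norm_sq_le_of_quadratic_nonneg hP fun a c => ?_
  rw [← integral_inner_op_smul_sub_smul_self hF hG]
  exact integral_nonneg fun t => inner_self_nonneg

lemma integral_inner_sub_integral [CompleteSpace X] [IsProbabilityMeasure μ] {f g : Ω → X}
    (hf : MemLp f 2 μ) (hg : MemLp g 2 μ) :
    ∫ t, ⟪f t - ∫ s, f s ∂μ, g t - ∫ s, g s ∂μ⟫ ∂μ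
      = (∫ t, ⟪f t, g t⟫ ∂μ) - ⟪∫ t, f t ∂μ, ∫ t, g t ∂μ⟫ := by
  set p := ∫ s, f s ∂μ
  set q := ∫ s, g s ∂μ
  have hf₁ : Integrable f μ := hf.integrable one_le_two
  have hg₁ : Integrable g μ := hg.integrable one_le_two
  have hfq : Integrable (fun t => ⟪f t, q⟫) μ := ((innerL A X).flip q).integrable_comp hf₁
  have hpg : Integrable (fun t => ⟪p, g t⟫) μ := (innerL A X p).integrable_comp hg₁
  have hfq' : ∫ t, ⟪f t, q⟫ ∂μ = ⟪p, q⟫ := ((innerL A X).flip q).integral_comp_comm hf₁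
  have hpg' : ∫ t, ⟪p, g t⟫ ∂μ = ⟪p, q⟫ := (innerL A X p).integral_comp_comm hg₁
  have hfg := integrable_inner (A := A) hf hg
  simp_rw [inner_sub_left, inner_sub_right]
  rw [integral_sub, integral_sub hfg hfq, integral_sub hpg (integrable_const _), hfq', hpg',
    integral_const, probReal_univ, one_smul, sub_self, sub_zero]
  all_goals fun_prop

end Integral

end RightCStarModule

/-- Schwarz inequality for the Grüss functional on `L₂(Ω, X)` for a Hilbert C*-module `X`. -/
theorem gruss_functional_schwarz {A : Type*} [NonUnitalCStarAlgebra A]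
    [PartialOrder A] [StarOrderedRing A]
    {X : Type*} [NormedAddCommGroup X] [NormedSpace ℂ X] [SMul Aᵐᵒᵖ X] [RightCStarModule A X]
    [CompleteSpace X]
    {Ω : Type*} [MeasurableSpace Ω] (μ : Measure Ω) [IsProbabilityMeasure μ]
    (f g : Ω → X) (hf : MemLp f 2 μ) (hg : MemLp g 2 μ) :
    ‖(∫ t, (inner A (f t) (g t) : A) ∂μ) - (inner A (∫ t, f t ∂μ) (∫ t, g t ∂μ) : A)‖ ^ 2 ≤
      ‖(∫ t, (inner A (f t) (f t) : A) ∂μ) - (inner A (∫ t, f t ∂μ) (∫ t, f t ∂μ) : A)‖ *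
        ‖(∫ t, (inner A (g t) (g t) : A) ∂μ) - (inner A (∫ t, g t ∂μ) (∫ t, g t ∂μ) : A)‖ := by
  rw [← RightCStarModule.integral_inner_sub_integral hf hg,
    ← RightCStarModule.integral_inner_sub_integral hf hf,
    ← RightCStarModule.integral_inner_sub_integral hg hg]
  exact RightCStarModule.norm_integral_inner_sq_le (hf.sub (memLp_const _))
    (hg.sub (memLp_const _))
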